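/- Let δ ∈ (0, 1) and let K_δ denote the set of sequences m : ℤ → ℝ for which there exists a finite positive Borel measure F on ℝ with topological support contained in [−1+δ, 1−δ] such that m(k) = ∫ α^{|k|} F(dα) for all k ∈ ℤ. Let γ ∈ K_δ. For each M ∈ ℕ, let r_M : ℤ → ℝ be a sequence such that: r_M has finite support (there exists n(M) with r_M(k) = 0 whenever |k| ≥ n(M)); r_M(−k) = r_M(k) and r_M(0) ≥ |r_M(k)| for all k ∈ ℤ; and r_M(k) → γ(k) as M → ∞ for each fixed k ∈ ℤ. Suppose m_M ∈ K_δ satisfies ∑_{k ∈ ℤ} (r_M(k) − m_M(k))² ≤ ∑_{k ∈ ℤ} (r_M(k) − m(k))² for every m ∈ K_δ. Then ∑_{k ∈ ℤ} ( m_M(k) − γ(k) )² → 0 and ∑_{k ∈ ℤ} m_M(k) → ∑_{k ∈ ℤ} γ(k) as M → ∞ (the families (m_M(k))_{k∈ℤ} and (γ(k))_{k∈ℤ} being summable). -/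

import Mathlib

open MeasureTheory Filter

/-- The topological support of a positive Borel measure on ℝ: the set of points every open
neighborhood of which has positive measure. -/
def msupport (μ : Measure ℝ) : Set ℝ :=
  {x | ∀ U : Set ℝ, IsOpen U → x ∈ U → 0 < μ U}

/-- The set of `[−1+δ, 1−δ]`-moment sequences: sequences `m : ℤ → ℝ` representable as
`m(k) = ∫ α^{|k|} F(dα)` for some finite positive Borel measure `F` with topological support
contained in `[−1+δ, 1−δ]`. -/
def Kdelta (δ : ℝ) : Set (ℤ → ℝ) :=
  {m | ∃ F : Measure ℝ, IsFiniteMeasure F ∧ msupport F ⊆ Set.Icc (-1 + δ) (1 - δ) ∧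
    ∀ k : ℤ, m k = ∫ α, α ^ k.natAbs ∂F}

lemma msupport_compl_null (F : Measure ℝ) : F (msupport F)ᶜ = 0 := by
  obtain ⟨B, hBc, -, hB⟩ := TopologicalSpace.exists_countable_basis ℝ
  have hsub : (msupport F)ᶜ ⊆ ⋃₀ {U | U ∈ B ∧ F U = 0} := by
    intro x hx
    simp only [msupport, Set.mem_compl_iff, Set.mem_setOf_eq] at hx
    push_neg at hx
    obtain ⟨U, hU, hxU, hFU⟩ := hx
    have hFU' : F U = 0 := le_antisymm hFU zero_le
    obtain ⟨V, hV, hxV, hVU⟩ := hB.exists_subset_of_mem_open hxU hU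
    exact ⟨V, ⟨hV, measure_mono_null hVU hFU'⟩, hxV⟩
  refine measure_mono_null hsub ?_
  rw [measure_sUnion_null_iff (hBc.mono (fun U hU => hU.1))]
  exact fun U hU => hU.2

lemma Kdelta_bound {δ : ℝ} (hδ1 : δ < 1) {f : ℤ → ℝ} (hf : f ∈ Kdelta δ) :
    0 ≤ f 0 ∧ ∀ k : ℤ, |f k| ≤ f 0 * (1 - δ) ^ k.natAbs := by
  obtain ⟨F, hFfin, hsupp, hm⟩ := hf
  haveI := hFfin
  have h1 : ∀ᵐ α ∂F, α ∈ msupport F := by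
    rw [ae_iff]
    simpa [Set.compl_def] using msupport_compl_null F
  have hae : ∀ᵐ α ∂F, |α| ≤ 1 - δ := by
    filter_upwards [h1] with α hα
    have h2 := hsupp hα
    rw [Set.mem_Icc] at h2
    rw [abs_le]
    constructor <;> linarith [h2.1, h2.2]
  have h0 : f 0 = (F Set.univ).toReal := by
    rw [hm 0]; simp; rfl
  constructor
  · rw [h0]; exact ENNReal.toReal_nonneg
  · intro k
    rw [hm k, h0]
    have hb : ∀ᵐ α ∂F, ‖α ^ k.natAbs‖ ≤ (1 - δ) ^ k.natAbs := by
      filter_upwards [hae] with α hα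
      rw [Real.norm_eq_abs, abs_pow]
      exact pow_le_pow_left₀ (abs_nonneg _) hα _
    calc |∫ α, α ^ k.natAbs ∂F| ≤ (1 - δ) ^ k.natAbs * (F Set.univ).toReal :=
          norm_integral_le_of_norm_le_const hb
      _ = (F Set.univ).toReal * (1 - δ) ^ k.natAbs := mul_comm _ _

lemma zero_mem_Kdelta (δ : ℝ) : (fun _ : ℤ => (0 : ℝ)) ∈ Kdelta δ := by
  refine ⟨0, inferInstance, ?_, ?_⟩
  · intro x hx
    have := hx Set.univ isOpen_univ (Set.mem_univ x)
    simp at this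
  · intro k; simp

lemma summable_geom_int {ρ : ℝ} (h0 : 0 ≤ ρ) (h1 : ρ < 1) :
    Summable (fun k : ℤ => ρ ^ k.natAbs) := by
  have h := summable_geometric_of_lt_one h0 h1
  exact Summable.of_nat_of_neg (by simpa using h) (by simpa using h)

lemma summable_finmod {u v : ℤ → ℝ} (s : Finset ℤ) (h : ∀ k ∉ s, u k = v k)
    (hv : Summable v) : Summable u := by
  have h1 : Summable (fun k => u k - v k) :=
    summable_of_ne_finset_zero (s := s) (fun k hk => by rw [h k hk]; ring)
  exact (h1.add hv).congr (fun k => by ring)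

lemma summable_of_decay {ρ c : ℝ} (h0 : 0 ≤ ρ) (h1 : ρ < 1) {f : ℤ → ℝ}
    (hb : ∀ k, |f k| ≤ c * ρ ^ k.natAbs) : Summable f :=
  Summable.of_norm_bounded ((summable_geom_int h0 h1).mul_left c)
    (fun k => by simpa [Real.norm_eq_abs] using hb k)

lemma summable_sq_of_decay {ρ c : ℝ} (h0 : 0 ≤ ρ) (h1 : ρ < 1) {f : ℤ → ℝ}
    (hb : ∀ k, |f k| ≤ c * ρ ^ k.natAbs) : Summable (fun k => f k ^ 2) := by
  refine Summable.of_nonneg_of_le (fun k => sq_nonneg _) (fun k => ?_)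
    ((summable_geom_int h0 h1).mul_left (c ^ 2))
  have h := hb k
  have h2 : 0 ≤ ρ ^ k.natAbs := pow_nonneg h0 _
  have h3 : ρ ^ k.natAbs ≤ 1 := pow_le_one₀ h0 (le_of_lt h1)
  have h4 : |f k| * |f k| ≤ (c * ρ ^ k.natAbs) * (c * ρ ^ k.natAbs) :=
    mul_le_mul h h (abs_nonneg _) ((abs_nonneg _).trans h)
  have h5 : 0 ≤ c ^ 2 * ρ ^ k.natAbs * (1 - ρ ^ k.natAbs) :=
    mul_nonneg (mul_nonneg (sq_nonneg c) h2) (by linarith)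
  nlinarith [sq_abs (f k)]

lemma summable_mul_of_sq {f g : ℤ → ℝ} (hf : Summable (fun k => f k ^ 2))
    (hg : Summable (fun k => g k ^ 2)) : Summable (fun k => f k * g k) := by
  refine Summable.of_norm_bounded ((hf.add hg).mul_left (1 / 2)) (fun k => ?_)
  rw [Real.norm_eq_abs, abs_mul]
  nlinarith [sq_nonneg (|f k| - |g k|), sq_abs (f k), sq_abs (g k),
    abs_nonneg (f k), abs_nonneg (g k)]

set_option maxHeartbeats 2000000 in
/-- Consistency of the moment least-squares projection: if `r_M` are finitely supported, even
sequences peaked at 0 converging pointwise to a moment sequence `γ ∈ K_δ`, and `m_M ∈ K_δ` is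
the ℓ²-projection of `r_M` onto `K_δ`, then `m_M → γ` in ℓ² and `∑_k m_M(k) → ∑_k γ(k)`. -/
theorem stmt14 (δ : ℝ) (hδ : δ ∈ Set.Ioo (0 : ℝ) 1)
    (γ : ℤ → ℝ) (hγ : γ ∈ Kdelta δ)
    (r : ℕ → ℤ → ℝ)
    (hfin : ∀ M, ∃ n : ℕ, ∀ k : ℤ, (n : ℤ) ≤ |k| → r M k = 0)
    (hsymm : ∀ M, ∀ k : ℤ, r M (-k) = r M k)
    (hpeak : ∀ M, ∀ k : ℤ, |r M k| ≤ r M 0)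
    (hconv : ∀ k : ℤ, Tendsto (fun M => r M k) atTop (nhds (γ k)))
    (m : ℕ → ℤ → ℝ) (hmK : ∀ M, m M ∈ Kdelta δ)
    (hproj : ∀ M, ∀ m' ∈ Kdelta δ,
      ∑' k : ℤ, (r M k - m M k) ^ 2 ≤ ∑' k : ℤ, (r M k - m' k) ^ 2) :
    Summable γ ∧ (∀ M, Summable (m M)) ∧
    Tendsto (fun M => ∑' k : ℤ, (m M k - γ k) ^ 2) atTop (nhds 0) ∧
    Tendsto (fun M => ∑' k : ℤ, m M k) atTop (nhds (∑' k : ℤ, γ k)) := by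
  obtain ⟨hδ0, hδ1⟩ := hδ
  set ρ : ℝ := 1 - δ with hρdef
  have hρ0 : 0 ≤ ρ := by rw [hρdef]; linarith
  have hρ1 : ρ < 1 := by rw [hρdef]; linarith
  have hgeom : Summable (fun k : ℤ => ρ ^ k.natAbs) := summable_geom_int hρ0 hρ1
  have hgeom_nn : ∀ k : ℤ, 0 ≤ ρ ^ k.natAbs := fun k => pow_nonneg hρ0 _
  have hgeom_le1 : ∀ k : ℤ, ρ ^ k.natAbs ≤ 1 := fun k => pow_le_one₀ hρ0 (le_of_lt hρ1)
  set G : ℝ := ∑' k : ℤ, ρ ^ k.natAbs with hGdef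
  have hGnn : 0 ≤ G := tsum_nonneg hgeom_nn
  obtain ⟨hγ0, hγb⟩ := Kdelta_bound hδ1 hγ
  have hmb : ∀ M, 0 ≤ m M 0 ∧ ∀ k, |m M k| ≤ m M 0 * ρ ^ k.natAbs :=
    fun M => Kdelta_bound hδ1 (hmK M)
  -- summability facts
  have Sγ : Summable γ := summable_of_decay hρ0 hρ1 hγb
  have Sγ2 : Summable (fun k => γ k ^ 2) := summable_sq_of_decay hρ0 hρ1 hγb
  have Sm : ∀ M, Summable (m M) := fun M => summable_of_decay hρ0 hρ1 (hmb M).2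
  have Sm2 : ∀ M, Summable (fun k => m M k ^ 2) :=
    fun M => summable_sq_of_decay hρ0 hρ1 (hmb M).2
  have hdb : ∀ M k, |m M k - γ k| ≤ (m M 0 + γ 0) * ρ ^ k.natAbs := by
    intro M k
    have h1 := (hmb M).2 k
    have h2 := hγb k
    have h3 : |m M k - γ k| ≤ |m M k| + |γ k| := abs_sub _ _
    rw [add_mul]; linarith
  have Sd2 : ∀ M, Summable (fun k => (m M k - γ k) ^ 2) :=
    fun M => summable_sq_of_decay hρ0 hρ1 (hdb M)
  -- finite support finsets for r
  have hrs' : ∀ M, ∃ s : Finset ℤ, ∀ k ∉ s, r M k = 0 := by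
    intro M
    obtain ⟨n, hn⟩ := hfin M
    refine ⟨Finset.Icc (-(n : ℤ)) n, fun k hk => hn k ?_⟩
    rw [Finset.mem_Icc] at hk
    rcases le_or_gt 0 k with h | h
    · rw [abs_of_nonneg h]; omega
    · rw [abs_of_neg h]; omega
  choose rs hrs using hrs'
  have hr00 : ∀ M, 0 ≤ r M 0 := fun M => (abs_nonneg _).trans (hpeak M 0)
  set C0 : ℝ := |γ 0| + 1 with hC0def
  have hC0 : 0 < C0 := by positivity
  have hγ0C0 : γ 0 ≤ C0 := by rw [hC0def]; linarith [le_abs_self (γ 0)]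
  -- summability for the cross terms
  have Sr2γ : ∀ M, Summable (fun k => (r M k - γ k) ^ 2) :=
    fun M => summable_finmod (rs M) (fun k hk => by rw [hrs M k hk]; ring) Sγ2
  have Scrossγ : ∀ M, Summable (fun k => (r M k - γ k) * (m M k - γ k)) := by
    intro M
    have hv : Summable (fun k => (0 - γ k) * (m M k - γ k)) :=
      summable_mul_of_sq (Sγ2.congr (fun k => by ring)) (Sd2 M)
    exact summable_finmod (rs M) (fun k hk => by rw [hrs M k hk]) hv
  -- key inequality from minimality
  have key : ∀ M (v : ℤ → ℝ), v ∈ Kdelta δ →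
      Summable (fun k => (r M k - v k) ^ 2) →
      Summable (fun k => (r M k - v k) * (m M k - v k)) →
      Summable (fun k => (m M k - v k) ^ 2) →
      ∑' k, (m M k - v k) ^ 2 ≤ 2 * ∑' k, (r M k - v k) * (m M k - v k) := by
    intro M v hv S1 S2 S3
    have hmin := hproj M v hv
    have hexp : ∑' k, (r M k - m M k) ^ 2
        = ∑' k, (r M k - v k) ^ 2 - 2 * ∑' k, (r M k - v k) * (m M k - v k)
            + ∑' k, (m M k - v k) ^ 2 := by
      have e1 : ∀ k : ℤ, (r M k - m M k) ^ 2
          = ((r M k - v k) ^ 2 - 2 * ((r M k - v k) * (m M k - v k)))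
            + (m M k - v k) ^ 2 := fun k => by ring
      rw [tsum_congr e1, Summable.tsum_add (S1.sub (S2.mul_left 2)) S3,
        Summable.tsum_sub S1 (S2.mul_left 2), tsum_mul_left]
    linarith
  -- mass bound
  have hmass : ∀ M, r M 0 ≤ C0 → m M 0 ≤ 2 * C0 * G := by
    intro M hr0
    have S1 : Summable (fun k => (r M k - (fun _ : ℤ => (0:ℝ)) k) ^ 2) :=
      summable_of_ne_finset_zero (s := rs M) (fun k hk => by rw [hrs M k hk]; ring)
    have S3 : Summable (fun k => (m M k - (fun _ : ℤ => (0:ℝ)) k) ^ 2) :=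
      (Sm2 M).congr (fun k => by ring)
    have S2 : Summable (fun k => (r M k - (fun _ : ℤ => (0:ℝ)) k)
        * (m M k - (fun _ : ℤ => (0:ℝ)) k)) := by
      have hv : Summable (fun k : ℤ => (0:ℝ)) := summable_zero
      exact summable_finmod (rs M) (fun k hk => by simp [hrs M k hk]) hv
    have h1 := key M (fun _ => 0) (zero_mem_Kdelta δ) S1 S2 S3
    have h2 : ∑' k, (r M k - (fun _ : ℤ => (0:ℝ)) k) * (m M k - (fun _ : ℤ => (0:ℝ)) k)
        ≤ C0 * m M 0 * G := by
      rw [hGdef, ← tsum_mul_left]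
      refine Summable.tsum_le_tsum (fun k => ?_) S2 (hgeom.mul_left _)
      have ha : |r M k| ≤ C0 := (hpeak M k).trans hr0
      have hb := (hmb M).2 k
      calc (r M k - 0) * (m M k - 0) ≤ |(r M k) * (m M k)| := by
            rw [sub_zero, sub_zero]; exact le_abs_self _
        _ = |r M k| * |m M k| := abs_mul _ _
        _ ≤ C0 * (m M 0 * ρ ^ k.natAbs) :=
            mul_le_mul ha hb (abs_nonneg _) (le_of_lt hC0)
        _ = C0 * m M 0 * ρ ^ k.natAbs := by ring
    have h3 : (m M 0) ^ 2 ≤ ∑' k, (m M k - (fun _ : ℤ => (0:ℝ)) k) ^ 2 := by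
      have := Summable.le_tsum S3 0 (fun j _ => sq_nonneg _)
      simpa using this
    rcases eq_or_lt_of_le (hmb M).1 with h | h
    · rw [← h]; positivity
    · have h4 : m M 0 * m M 0 ≤ (2 * C0 * G) * m M 0 := by nlinarith
      exact le_of_mul_le_mul_right h4 h
  set B0 : ℝ := 2 * C0 * G with hB0def
  have hB0 : 0 ≤ B0 := by positivity
  -- eventual bound on r M 0
  have hev0 : ∀ᶠ M in atTop, r M 0 ≤ C0 := by
    have h := Metric.tendsto_atTop.1 (hconv 0) 1 one_pos
    obtain ⟨N, hN⟩ := h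
    refine eventually_atTop.2 ⟨N, fun M hM => ?_⟩
    have h2 := hN M hM
    rw [Real.dist_eq] at h2
    have h3 := (abs_lt.1 h2).2
    have h4 := le_abs_self (γ 0)
    rw [hC0def]; linarith
  set K1 : ℝ := (C0 + γ 0) * (B0 + γ 0) with hK1def
  have hK1 : 0 ≤ K1 := mul_nonneg (by linarith) (by linarith)
  -- the main bound
  have hmain : ∀ M, r M 0 ≤ C0 → ∀ s : Finset ℤ,
      (∑' k, (m M k - γ k) ^ 2) ≤ 4 * (∑ k ∈ s, (r M k - γ k) ^ 2)
        + 4 * K1 * (∑' k : ↑((↑s : Set ℤ)ᶜ), ρ ^ (k : ℤ).natAbs) := by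
    intro M hr0 s
    set D : ℝ := ∑' k, (m M k - γ k) ^ 2 with hDdef
    have hD0 : 0 ≤ D := tsum_nonneg (fun k => sq_nonneg _)
    set A : ℝ := ∑ k ∈ s, (r M k - γ k) ^ 2 with hAdef
    have hA0 : 0 ≤ A := Finset.sum_nonneg (fun k _ => sq_nonneg _)
    set T : ℝ := ∑' k : ↑((↑s : Set ℤ)ᶜ), ρ ^ (k : ℤ).natAbs with hTdef
    have hT0 : 0 ≤ T := tsum_nonneg (fun k => hgeom_nn _)
    have hkey := key M γ hγ (Sr2γ M) (Scrossγ M) (Sd2 M)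
    have hsplit : ∑' k, (r M k - γ k) * (m M k - γ k)
        = (∑ k ∈ s, (r M k - γ k) * (m M k - γ k))
          + ∑' k : ↑((↑s : Set ℤ)ᶜ), (r M (k : ℤ) - γ k) * (m M (k : ℤ) - γ k) :=
      (Summable.sum_add_tsum_compl (s := s) (Scrossγ M)).symm
    -- Cauchy-Schwarz part
    have hs1 : ∑ k ∈ s, (r M k - γ k) * (m M k - γ k) ≤ Real.sqrt A * Real.sqrt D := by
      have cs := Finset.sum_mul_sq_le_sq_mul_sq s (fun k => r M k - γ k)
        (fun k => m M k - γ k)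
      have hle : ∑ k ∈ s, (m M k - γ k) ^ 2 ≤ D :=
        Summable.sum_le_tsum s (fun k _ => sq_nonneg _) (Sd2 M)
      have h2 : (∑ k ∈ s, (r M k - γ k) * (m M k - γ k)) ^ 2 ≤ A * D :=
        cs.trans (mul_le_mul_of_nonneg_left hle hA0)
      calc ∑ k ∈ s, (r M k - γ k) * (m M k - γ k)
          ≤ |∑ k ∈ s, (r M k - γ k) * (m M k - γ k)| := le_abs_self _
        _ = Real.sqrt ((∑ k ∈ s, (r M k - γ k) * (m M k - γ k)) ^ 2) :=
            (Real.sqrt_sq_eq_abs _).symm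
        _ ≤ Real.sqrt (A * D) := Real.sqrt_le_sqrt h2
        _ = Real.sqrt A * Real.sqrt D := Real.sqrt_mul hA0 _
    -- tail part
    have hs2 : ∑' k : ↑((↑s : Set ℤ)ᶜ), (r M (k : ℤ) - γ k) * (m M (k : ℤ) - γ k)
        ≤ K1 * T := by
      have hstep : ∑' k : ↑((↑s : Set ℤ)ᶜ), (r M (k : ℤ) - γ k) * (m M (k : ℤ) - γ k)
          ≤ ∑' k : ↑((↑s : Set ℤ)ᶜ), K1 * ρ ^ (k : ℤ).natAbs := by
        refine Summable.tsum_le_tsum (fun k => ?_) ((Scrossγ M).subtype _)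
          ((hgeom.mul_left K1).subtype _)
        have ha : |r M (k : ℤ) - γ k| ≤ C0 + γ 0 := by
          have h1 : |r M (k : ℤ)| ≤ C0 := (hpeak M _).trans hr0
          have h2 : |γ (k : ℤ)| ≤ γ 0 := by
            have := hγb (k : ℤ)
            have h3 : γ 0 * ρ ^ (k : ℤ).natAbs ≤ γ 0 * 1 :=
              mul_le_mul_of_nonneg_left (hgeom_le1 _) hγ0
            linarith
          calc |r M (k : ℤ) - γ k| ≤ |r M (k : ℤ)| + |γ (k : ℤ)| := abs_sub _ _
            _ ≤ C0 + γ 0 := add_le_add h1 h2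
        have hb : |m M (k : ℤ) - γ k| ≤ (B0 + γ 0) * ρ ^ (k : ℤ).natAbs := by
          refine (hdb M _).trans ?_
          have := hmass M hr0
          exact mul_le_mul_of_nonneg_right (by rw [hB0def]; linarith) (hgeom_nn _)
        calc (r M (k : ℤ) - γ k) * (m M (k : ℤ) - γ k)
            ≤ |(r M (k : ℤ) - γ k) * (m M (k : ℤ) - γ k)| := le_abs_self _
          _ = |r M (k : ℤ) - γ k| * |m M (k : ℤ) - γ k| := abs_mul _ _
          _ ≤ (C0 + γ 0) * ((B0 + γ 0) * ρ ^ (k : ℤ).natAbs) :=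
              mul_le_mul ha hb (abs_nonneg _) (by linarith)
          _ = K1 * ρ ^ (k : ℤ).natAbs := by rw [hK1def]; ring
      calc _ ≤ ∑' k : ↑((↑s : Set ℤ)ᶜ), K1 * ρ ^ (k : ℤ).natAbs := hstep
        _ = K1 * T := by rw [hTdef, tsum_mul_left]
    -- combine
    have hcomb : D ≤ 2 * (Real.sqrt A * Real.sqrt D) + 2 * (K1 * T) := by
      calc D ≤ 2 * ∑' k, (r M k - γ k) * (m M k - γ k) := hkey
        _ = 2 * ((∑ k ∈ s, (r M k - γ k) * (m M k - γ k))
              + ∑' k : ↑((↑s : Set ℤ)ᶜ), (r M (k : ℤ) - γ k) * (m M (k : ℤ) - γ k)) := by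
            rw [hsplit]
        _ ≤ 2 * (Real.sqrt A * Real.sqrt D + K1 * T) := by linarith [hs1, hs2]
        _ = 2 * (Real.sqrt A * Real.sqrt D) + 2 * (K1 * T) := by ring
    have hsqA : Real.sqrt A ^ 2 = A := Real.sq_sqrt hA0
    have hsqD : Real.sqrt D ^ 2 = D := Real.sq_sqrt hD0
    nlinarith [sq_nonneg (Real.sqrt D - 2 * Real.sqrt A)]

  -- Conclusion 3: ℓ² convergence
  have hDtend : Tendsto (fun M => ∑' k : ℤ, (m M k - γ k) ^ 2) atTop (nhds 0) := by
    rw [Metric.tendsto_atTop]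
    intro ε hε
    have htail := tendsto_tsum_compl_atTop_zero (fun k : ℤ => ρ ^ k.natAbs)
    have hε' : 0 < ε / (16 * (K1 + 1)) := by positivity
    obtain ⟨s, hs⟩ := eventually_atTop.1 ((tendsto_order.1 htail).2 _ hε')
    have hTs : (∑' k : ↑((↑s : Set ℤ)ᶜ), ρ ^ (k : ℤ).natAbs) < ε / (16 * (K1 + 1)) :=
      hs s le_rfl
    have hT0 : 0 ≤ ∑' k : ↑((↑s : Set ℤ)ᶜ), ρ ^ (k : ℤ).natAbs :=
      tsum_nonneg (fun k => hgeom_nn _)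
    have hAconv : Tendsto (fun M => ∑ k ∈ s, (r M k - γ k) ^ 2) atTop (nhds 0) := by
      have h1 : ∀ k ∈ s, Tendsto (fun M => (r M k - γ k) ^ 2) atTop (nhds 0) := by
        intro k _
        have h2 : Tendsto (fun M => r M k - γ k) atTop (nhds 0) := by
          simpa using (hconv k).sub_const (γ k)
        simpa using h2.pow 2
      simpa using tendsto_finset_sum s h1
    have hAev := (tendsto_order.1 hAconv).2 (ε / 16) (by positivity)
    obtain ⟨N, hN⟩ := eventually_atTop.1 (hev0.and hAev)
    refine ⟨N, fun M hM => ?_⟩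
    obtain ⟨h1, h2⟩ := hN M hM
    have h3 := hmain M h1 s
    have hD0 : 0 ≤ ∑' k : ℤ, (m M k - γ k) ^ 2 := tsum_nonneg (fun k => sq_nonneg _)
    rw [Real.dist_eq, sub_zero, abs_of_nonneg hD0]
    have hK1' : (0 : ℝ) < K1 + 1 := by linarith
    have h4 : 4 * K1 * (∑' k : ↑((↑s : Set ℤ)ᶜ), ρ ^ (k : ℤ).natAbs)
        ≤ 4 * (K1 + 1) * (ε / (16 * (K1 + 1))) := by
      have := mul_le_mul_of_nonneg_left (le_of_lt hTs) (by linarith : (0:ℝ) ≤ 4 * K1)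
      have h5 : 4 * K1 * (ε / (16 * (K1 + 1))) ≤ 4 * (K1 + 1) * (ε / (16 * (K1 + 1))) := by
        have := le_of_lt hε'
        nlinarith
      linarith
    have h6 : 4 * (K1 + 1) * (ε / (16 * (K1 + 1))) = ε / 4 := by
      field_simp
      ring
    linarith
  -- Conclusion 4: convergence of sums
  have hStend : Tendsto (fun M => ∑' k : ℤ, m M k) atTop (nhds (∑' k : ℤ, γ k)) := by
    rw [Metric.tendsto_atTop]
    intro ε hε
    have htail := tendsto_tsum_compl_atTop_zero (fun k : ℤ => ρ ^ k.natAbs)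
    have hε' : 0 < ε / (4 * (B0 + γ 0 + 1)) := by positivity
    obtain ⟨s, hs⟩ := eventually_atTop.1 ((tendsto_order.1 htail).2 _ hε')
    have hTs : (∑' k : ↑((↑s : Set ℤ)ᶜ), ρ ^ (k : ℤ).natAbs) < ε / (4 * (B0 + γ 0 + 1)) :=
      hs s le_rfl
    have hT0 : 0 ≤ ∑' k : ↑((↑s : Set ℤ)ᶜ), ρ ^ (k : ℤ).natAbs :=
      tsum_nonneg (fun k => hgeom_nn _)
    set c : ℝ := (s.card : ℝ) with hcdef
    have hc0 : 0 ≤ c := Nat.cast_nonneg _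
    have hc1 : (0 : ℝ) < c + 1 := by linarith
    have hx2 : 0 < (ε / (2 * (c + 1))) ^ 2 := pow_pos (div_pos hε (by linarith)) 2
    have hDev := (tendsto_order.1 hDtend).2 ((ε / (2 * (c + 1))) ^ 2) hx2
    obtain ⟨N, hN⟩ := eventually_atTop.1 (hev0.and hDev)
    refine ⟨N, fun M hM => ?_⟩
    obtain ⟨h1, h2⟩ := hN M hM
    have hmm : m M 0 ≤ B0 := hmass M h1
    have Sdiff : Summable (fun k => m M k - γ k) := (Sm M).sub Sγ
    have Sabs : Summable (fun k => |m M k - γ k|) := Sdiff.abs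
    rw [Real.dist_eq, ← Summable.tsum_sub (Sm M) Sγ]
    have h5 : |∑' k : ℤ, (m M k - γ k)| ≤ ∑' k : ℤ, |m M k - γ k| := by
      simpa [Real.norm_eq_abs] using
        norm_tsum_le_tsum_norm (f := fun k : ℤ => m M k - γ k)
          (by simpa [Real.norm_eq_abs] using Sabs)
    have hsplit : ∑' k : ℤ, |m M k - γ k|
        = (∑ k ∈ s, |m M k - γ k|) + ∑' k : ↑((↑s : Set ℤ)ᶜ), |m M (k : ℤ) - γ (k : ℤ)| :=
      (Summable.sum_add_tsum_compl (s := s) Sabs).symm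
    have hsq : Real.sqrt (∑' k : ℤ, (m M k - γ k) ^ 2) < ε / (2 * (c + 1)) := by
      have h6 := Real.sqrt_lt_sqrt (tsum_nonneg (fun k => sq_nonneg _)) h2
      rwa [Real.sqrt_sq (le_of_lt (div_pos hε (by linarith)))] at h6
    have hp1 : ∑ k ∈ s, |m M k - γ k| ≤ c * Real.sqrt (∑' k : ℤ, (m M k - γ k) ^ 2) := by
      have hterm : ∀ k ∈ s, |m M k - γ k| ≤ Real.sqrt (∑' k : ℤ, (m M k - γ k) ^ 2) := by
        intro k _
        have h6 : (m M k - γ k) ^ 2 ≤ ∑' k : ℤ, (m M k - γ k) ^ 2 :=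
          Summable.le_tsum (Sd2 M) k (fun j _ => sq_nonneg _)
        calc |m M k - γ k| = Real.sqrt ((m M k - γ k) ^ 2) := (Real.sqrt_sq_eq_abs _).symm
          _ ≤ _ := Real.sqrt_le_sqrt h6
      calc ∑ k ∈ s, |m M k - γ k| ≤ ∑ _k ∈ s, Real.sqrt (∑' k : ℤ, (m M k - γ k) ^ 2) :=
            Finset.sum_le_sum hterm
        _ = c * Real.sqrt (∑' k : ℤ, (m M k - γ k) ^ 2) := by
            rw [Finset.sum_const, nsmul_eq_mul]
    have hp2 : ∑' k : ↑((↑s : Set ℤ)ᶜ), |m M (k : ℤ) - γ (k : ℤ)|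
        ≤ (B0 + γ 0) * ∑' k : ↑((↑s : Set ℤ)ᶜ), ρ ^ (k : ℤ).natAbs := by
      have hstep : ∑' k : ↑((↑s : Set ℤ)ᶜ), |m M (k : ℤ) - γ (k : ℤ)|
          ≤ ∑' k : ↑((↑s : Set ℤ)ᶜ), (B0 + γ 0) * ρ ^ (k : ℤ).natAbs := by
        refine Summable.tsum_le_tsum (fun k => ?_) (Sabs.subtype _)
          ((hgeom.mul_left (B0 + γ 0)).subtype _)
        refine (hdb M _).trans ?_
        exact mul_le_mul_of_nonneg_right (by linarith) (hgeom_nn _)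
      calc _ ≤ ∑' k : ↑((↑s : Set ℤ)ᶜ), (B0 + γ 0) * ρ ^ (k : ℤ).natAbs := hstep
        _ = _ := tsum_mul_left
    have hsqpos : 0 ≤ Real.sqrt (∑' k : ℤ, (m M k - γ k) ^ 2) := Real.sqrt_nonneg _
    have hne1 : c + 1 ≠ 0 := ne_of_gt hc1
    have hne2 : B0 + γ 0 + 1 ≠ 0 := ne_of_gt (by linarith : (0:ℝ) < B0 + γ 0 + 1)
    have e1 : (c + 1) * (ε / (2 * (c + 1))) = ε / 2 := by
      rw [← div_div, mul_comm, div_mul_cancel₀ _ hne1]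
    have e2 : (B0 + γ 0 + 1) * (ε / (4 * (B0 + γ 0 + 1))) = ε / 4 := by
      rw [← div_div, mul_comm, div_mul_cancel₀ _ hne2]
    have h7 : c * Real.sqrt (∑' k : ℤ, (m M k - γ k) ^ 2) ≤ ε / 2 := by
      have := mul_le_mul_of_nonneg_left (le_of_lt hsq) hc0
      nlinarith [le_of_lt hε]
    have h8 : (B0 + γ 0) * ∑' k : ↑((↑s : Set ℤ)ᶜ), ρ ^ (k : ℤ).natAbs ≤ ε / 4 := by
      have h9 := mul_le_mul_of_nonneg_left (le_of_lt hTs) (by linarith : (0:ℝ) ≤ B0 + γ 0)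
      nlinarith [le_of_lt hε', hT0]
    calc |∑' k : ℤ, (m M k - γ k)| ≤ ∑' k : ℤ, |m M k - γ k| := h5
      _ = _ := hsplit
      _ ≤ ε / 2 + ε / 4 := by linarith
      _ < ε := by linarith
  exact ⟨Sγ, Sm, hDtend, hStend⟩
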